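/- arXiv:1010.1030 — 8 statements merged into one kernel-verified Lean document; each statement's English description precedes it below -/
import Mathlib

section
/- Let $A$ and $B$ be complex matrices of size $d \times d'$. There exists a Hermitian $d' \times d'$ matrix $L$ with $A = BL$ if and only if $AB^\dagger = BA^\dagger$ and the column space (image) of $A$ is contained in the image of $B$. -/
open Matrix BigOperators Filter
open scoped ComplexOrder

noncomputable section

/-- Apply a real function to a matrix via the spectral theorem (0 if not Hermitian). -/
def matFun {n : Type} [Fintype n] [DecidableEq n] (f : ℝ → ℝ)
    (A : Matrix n n ℂ) : Matrix n n ℂ :=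
  if hA : A.IsHermitian then hA.cfc f else 0

/-- Matrix logarithm (via spectral calculus). -/
def mlog {n : Type} [Fintype n] [DecidableEq n] (A : Matrix n n ℂ) : Matrix n n ℂ :=
  matFun Real.log A

/-- Matrix square root (via spectral calculus). -/
def msqrt {n : Type} [Fintype n] [DecidableEq n] (A : Matrix n n ℂ) : Matrix n n ℂ :=
  matFun Real.sqrt A

/-- Moore–Penrose (generalized) inverse of a Hermitian matrix. -/
def mpinv {n : Type} [Fintype n] [DecidableEq n] (A : Matrix n n ℂ) : Matrix n n ℂ :=
  matFun (fun t => if t = 0 then 0 else t⁻¹) A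

/-- Density operator predicate. -/
def IsDensity {n : Type} [Fintype n] [DecidableEq n] (ρ : Matrix n n ℂ) : Prop :=
  ρ.PosSemidef ∧ ρ.trace = 1

/-- Support of a matrix, as the range of the associated linear map. -/
def msupp {n : Type} [Fintype n] [DecidableEq n] (ρ : Matrix n n ℂ) :
    Submodule ℂ (n → ℂ) :=
  LinearMap.range ρ.mulVecLin

/-- Trace norm. -/
def traceNorm {n : Type} [Fintype n] [DecidableEq n] (A : Matrix n n ℂ) : ℝ :=
  (Matrix.trace (msqrt (Aᴴ * A))).re

/-- Umegaki relative entropy. -/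
def relEnt {n : Type} [Fintype n] [DecidableEq n] (ρ σ : Matrix n n ℂ) : ℝ :=
  (Matrix.trace (ρ * (mlog ρ - mlog σ))).re

/-- RLD (Belavkin–Staszewski) relative entropy. -/
def DR {n : Type} [Fintype n] [DecidableEq n] (ρ σ : Matrix n n ℂ) : ℝ :=
  (Matrix.trace (ρ * mlog (msqrt ρ * mpinv σ * msqrt ρ))).re

/-- Classical relative entropy of probability vectors. -/
def classRelEnt {X : Type} [Fintype X] (p q : X → ℝ) : ℝ :=
  ∑ x, p x * Real.log (p x / q x)

/-- Probability vector predicate. -/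
def IsProb {X : Type} [Fintype X] (p : X → ℝ) : Prop :=
  (∀ x, 0 ≤ p x) ∧ ∑ x, p x = 1

/-- A CPTP map given by a Kraus representation. -/
def IsCPTP {n m : Type} [Fintype n] [DecidableEq n] [Fintype m] [DecidableEq m]
    (Λ : Matrix n n ℂ → Matrix m m ℂ) : Prop :=
  ∃ (k : ℕ) (K : Fin k → Matrix m n ℂ),
    (∑ i, (K i)ᴴ * K i = 1) ∧ ∀ A, Λ A = ∑ i, K i * A * (K i)ᴴ

/-- n-fold tensor power of a matrix. -/
def tensorPow {d : Type} [Fintype d] [DecidableEq d]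
    (ρ : Matrix d d ℂ) (n : ℕ) : Matrix (Fin n → d) (Fin n → d) ℂ :=
  fun i j => ∏ k, ρ (i k) (j k)

/-- Outer product |u⟩⟨u|. -/
def outer {n : Type} [Fintype n] (u : n → ℂ) : Matrix n n ℂ :=
  Matrix.vecMulVec u (star u)

/-- RLD Fisher information of a state `ρ` with tangent `X` (where the RLD exists,
this equals `tr ρ L† L` with `X = L ρ`). -/
def JR {n : Type} [Fintype n] [DecidableEq n] (ρ X : Matrix n n ℂ) : ℝ :=
  (Matrix.trace (X * mpinv ρ * X)).re

end

/-
If `A = B L` with `L` Hermitian then `A Bᴴ = B L Bᴴ` is Hermitian. Conversely, write `A = B C`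
and pick `Z` with `B Bᴴ Z = B` (possible since `B Bᴴ` and `B` have the same range). Then
`Q = Bᴴ Z` is Hermitian with `B Q = B`, so `Q = Zᴴ B` and `Q C Q = Zᴴ (A Bᴴ) Z` is Hermitian. For
`C' = Q C` the matrix `C' Q` is Hermitian, and `L = C' + (1 - Q) C'ᴴ` is a Hermitian solution.
-/

namespace Matrix

variable {m n k R : Type*}

theorem exists_mul_eq_of_range_mulVecLin_le [Fintype n] [Fintype k] [CommSemiring R]
    {A : Matrix m k R} {B : Matrix m n R}
    (h : LinearMap.range A.mulVecLin ≤ LinearMap.range B.mulVecLin) :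
    ∃ C : Matrix n k R, B * C = A := by
  have hcol : ∀ j, ∃ z, B *ᵥ z = A.col j := fun j ↦
    h (by rw [range_mulVecLin]; exact Submodule.subset_span ⟨j, rfl⟩)
  choose z hz using hcol
  refine ⟨(of z)ᵀ, ?_⟩
  ext i j
  simpa [mul_apply, mulVec, dotProduct] using congrFun (hz j) i

section StarOrderedField

variable [Fintype m] [Fintype n] [Field R] [PartialOrder R] [StarRing R] [StarOrderedRing R]

theorem range_mulVecLin_mul_conjTranspose_self (B : Matrix m n R) :
    LinearMap.range (B * Bᴴ).mulVecLin = LinearMap.range B.mulVecLin := by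
  refine Submodule.eq_of_le_of_finrank_le ?_ (rank_self_mul_conjTranspose B).ge
  rw [mulVecLin_mul]
  exact LinearMap.range_comp_le_range _ _

theorem exists_mul_conjTranspose_mul_eq_self (B : Matrix m n R) :
    ∃ Z : Matrix m n R, B * Bᴴ * Z = B :=
  exists_mul_eq_of_range_mulVecLin_le (range_mulVecLin_mul_conjTranspose_self B).ge

end StarOrderedField

section Ring

variable [Fintype n] [Ring R] [StarRing R]

theorem isHermitian_conjTranspose_mul_of_mul_conjTranspose_mul_eq [Fintype m]
    {B Z : Matrix m n R} (h : B * Bᴴ * Z = B) : (Bᴴ * Z).IsHermitian := by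
  have hZ : Zᴴ * B * Bᴴ = Bᴴ := by
    simpa [Matrix.mul_assoc] using congrArg conjTranspose h
  calc (Bᴴ * Z)ᴴ = Zᴴ * B := by rw [conjTranspose_mul, conjTranspose_conjTranspose]
    _ = Zᴴ * (B * Bᴴ * Z) := by rw [h]
    _ = Zᴴ * B * Bᴴ * Z := by simp only [Matrix.mul_assoc]
    _ = Bᴴ * Z := by rw [hZ]

theorem isHermitian_add_one_sub_mul_conjTranspose [DecidableEq n] {C Q : Matrix n n R}
    (hQ : Q.IsHermitian) (hCQ : (C * Q).IsHermitian) : (C + (1 - Q) * Cᴴ).IsHermitian := by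
  have hQC : Q * Cᴴ = C * Q := by simpa [hQ.eq] using hCQ.eq
  rw [IsHermitian, conjTranspose_add, conjTranspose_mul, conjTranspose_sub, conjTranspose_one,
    conjTranspose_conjTranspose, hQ.eq, sub_mul, mul_sub, mul_one, one_mul, hQC]
  abel

theorem mul_add_one_sub_mul_conjTranspose [DecidableEq n] {B : Matrix m n R} {C Q : Matrix n n R}
    (hBQ : B * Q = B) : B * (C + (1 - Q) * Cᴴ) = B * C := by
  rw [Matrix.mul_add, ← Matrix.mul_assoc, Matrix.mul_sub, Matrix.mul_one, hBQ, sub_self,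
    Matrix.zero_mul, add_zero]

end Ring

theorem exists_isHermitian_mul_eq_iff [Fintype m] [Fintype n] [DecidableEq n] [Field R]
    [PartialOrder R] [StarRing R] [StarOrderedRing R] (A B : Matrix m n R) :
    (∃ L : Matrix n n R, L.IsHermitian ∧ A = B * L) ↔
      A * Bᴴ = B * Aᴴ ∧ LinearMap.range A.mulVecLin ≤ LinearMap.range B.mulVecLin := by
  constructor
  · rintro ⟨L, hL, rfl⟩
    refine ⟨by rw [conjTranspose_mul, hL.eq, Matrix.mul_assoc], ?_⟩
    rw [mulVecLin_mul]
    exact LinearMap.range_comp_le_range _ _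
  · rintro ⟨hAB, hrange⟩
    obtain ⟨C, hBC⟩ := exists_mul_eq_of_range_mulVecLin_le hrange
    obtain ⟨Z, hZ⟩ := exists_mul_conjTranspose_mul_eq_self B
    have hQ : (Bᴴ * Z).IsHermitian := isHermitian_conjTranspose_mul_of_mul_conjTranspose_mul_eq hZ
    have hBQ : B * (Bᴴ * Z) = B := by rw [← Matrix.mul_assoc, hZ]
    have hQCQ : (Bᴴ * Z * C * (Bᴴ * Z)).IsHermitian := by
      have hABH : (A * Bᴴ).IsHermitian := by
        rw [IsHermitian, conjTranspose_mul, conjTranspose_conjTranspose, hAB]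
      have hQ' : Bᴴ * Z = Zᴴ * B := by simpa using hQ.eq.symm
      have hZABZ := isHermitian_conjTranspose_mul_mul Z hABH
      rw [← hBC] at hZABZ
      nth_rewrite 1 [hQ']
      simpa only [Matrix.mul_assoc] using hZABZ
    refine ⟨_, isHermitian_add_one_sub_mul_conjTranspose hQ hQCQ, ?_⟩
    rw [mul_add_one_sub_mul_conjTranspose hBQ, ← Matrix.mul_assoc, hBQ, hBC]

end Matrix

/-- There is a Hermitian `L` with `A = B * L` iff `A * Bᴴ = B * Aᴴ`
and the column space of `A` is contained in that of `B`. -/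
theorem stmt_0 {d d' : ℕ} (A B : Matrix (Fin d) (Fin d') ℂ) :
    (∃ L : Matrix (Fin d') (Fin d') ℂ, L.IsHermitian ∧ A = B * L) ↔
      (A * Bᴴ = B * Aᴴ ∧
        LinearMap.range A.mulVecLin ≤ LinearMap.range B.mulVecLin) :=
  Matrix.exists_isHermitian_mul_eq_iff A B
end

section
/- For any two density operators $\rho, \sigma$ on a finite-dimensional Hilbert space with $\mathrm{supp}\,\rho = \mathrm{supp}\,\sigma$ of rank $r$, there exist linearly independent unit vectors $\phi_1, \dots, \phi_r$ and probability vectors $p, q$ on $\{1,\dots,r\}$ such that $\rho = \sum_{x=1}^r p(x) |\phi_x\rangle\langle\phi_x|$ and $\sigma = \sum_{x=1}^r q(x) |\phi_x\rangle\langle\phi_x|$ (and hence every mixture $t\rho + (1-t)\sigma = \sum_x (t p(x)+(1-t)q(x))|\phi_x\rangle\langle\phi_x|$). -/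
open Matrix BigOperators Filter
open scoped ComplexOrder

/-!
With `A = σ^{1/2}` and `B` the inverse square root of `σ` on its support, `M = B ρ B` is positive
semidefinite and `ρ = A M A`, because `A B` is the projection onto `supp σ = supp ρ`.
Diagonalizing `M = ∑ₓ μₓ |uₓ⟩⟨uₓ|` and putting `wₓ = A uₓ` gives `ρ = ∑ₓ μₓ |wₓ⟩⟨wₓ|` and
`σ = A A = ∑ₓ |wₓ⟩⟨wₓ|`. Equality of the supports forces `wₓ = 0` whenever `μₓ = 0`, and `M` has
rank `r`, so only `r` terms remain; since they span `supp σ`, of dimension `r`, the `wₓ` are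
linearly independent. Writing `wₓ = sₓ φₓ` with unit vectors `φₓ`, the weights `p = μ s²` and
`q = s²` are probability vectors by taking traces.
-/

namespace Matrix.IsHermitian

variable {n 𝕜 : Type*} [RCLike 𝕜] [Fintype n] [DecidableEq n] {A : Matrix n n 𝕜}
  (hA : A.IsHermitian)
include hA

lemma cfc_mul_cfc (f g : ℝ → ℝ) : hA.cfc f * hA.cfc g = hA.cfc (fun t => f t * g t) := by
  simp only [← hA.cfc_eq]
  exact (cfc_mul f g A (A.finite_real_spectrum.continuousOn f)
    (A.finite_real_spectrum.continuousOn g)).symm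

lemma cfc_id_eq : hA.cfc (fun t => t) = A := by
  rw [← hA.cfc_eq, cfc_id' ℝ A hA.isSelfAdjoint]

lemma cfc_mul_self (f : ℝ → ℝ) : hA.cfc f * A = hA.cfc (fun t => f t * t) := by
  rw [← hA.cfc_mul_cfc, hA.cfc_id_eq]

lemma self_mul_cfc (f : ℝ → ℝ) : A * hA.cfc f = hA.cfc (fun t => t * f t) := by
  rw [← hA.cfc_mul_cfc, hA.cfc_id_eq]

lemma isHermitian_cfc (f : ℝ → ℝ) : (hA.cfc f).IsHermitian := by
  rw [← hA.cfc_eq]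
  exact cfc_predicate f A

lemma cfc_congr_of_eigenvalues {f g : ℝ → ℝ}
    (h : ∀ i, f (hA.eigenvalues i) = g (hA.eigenvalues i)) : hA.cfc f = hA.cfc g := by
  simp only [← hA.cfc_eq]
  refine cfc_congr fun t ht => ?_
  obtain ⟨i, rfl⟩ := hA.spectrum_real_eq_range_eigenvalues ▸ ht
  exact h i

end Matrix.IsHermitian

lemma Matrix.PosSemidef.cfc_congr_of_nonneg {n : Type*} [Fintype n] [DecidableEq n]
    {A : Matrix n n ℂ} (hA : A.PosSemidef) {f g : ℝ → ℝ} (h : ∀ t, 0 ≤ t → f t = g t) :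
    hA.1.cfc f = hA.1.cfc g :=
  hA.1.cfc_congr_of_eigenvalues fun i => h _ (hA.eigenvalues_nonneg i)

lemma Matrix.PosSemidef.cfc_eq_self_of_nonneg {n : Type*} [Fintype n] [DecidableEq n]
    {A : Matrix n n ℂ} (hA : A.PosSemidef) {f : ℝ → ℝ} (h : ∀ t, 0 ≤ t → f t = t) :
    hA.1.cfc f = A :=
  (hA.cfc_congr_of_nonneg h).trans hA.1.cfc_id_eq

/-- Since `(√0)⁻¹ = 0`, this is the inverse square root of `σ` on its support and `0` on its
kernel. -/
noncomputable def msqrtInv {n : Type} [Fintype n] [DecidableEq n] (σ : Matrix n n ℂ) :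
    Matrix n n ℂ :=
  matFun (fun t => (Real.sqrt t)⁻¹) σ

namespace Matrix.PosSemidef

variable {n : Type} [Fintype n] [DecidableEq n] {σ : Matrix n n ℂ} (hσ : σ.PosSemidef)
include hσ

lemma msqrt_eq_cfc : msqrt σ = hσ.1.cfc Real.sqrt := dif_pos hσ.1

lemma msqrtInv_eq_cfc : msqrtInv σ = hσ.1.cfc (fun t => (Real.sqrt t)⁻¹) := dif_pos hσ.1

lemma isHermitian_msqrt : (msqrt σ).IsHermitian :=
  hσ.msqrt_eq_cfc ▸ hσ.1.isHermitian_cfc _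

lemma isHermitian_msqrtInv : (msqrtInv σ).IsHermitian :=
  hσ.msqrtInv_eq_cfc ▸ hσ.1.isHermitian_cfc _

lemma msqrt_mul_msqrt : msqrt σ * msqrt σ = σ := by
  rw [hσ.msqrt_eq_cfc, hσ.1.cfc_mul_cfc]
  exact hσ.cfc_eq_self_of_nonneg fun t ht => Real.mul_self_sqrt ht

lemma msqrt_mul_msqrtInv_mul_self : msqrt σ * msqrtInv σ * σ = σ := by
  rw [hσ.msqrt_eq_cfc, hσ.msqrtInv_eq_cfc, hσ.1.cfc_mul_cfc, hσ.1.cfc_mul_self]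
  refine hσ.cfc_eq_self_of_nonneg fun t ht => ?_
  rcases ht.eq_or_lt with rfl | ht
  · simp
  · rw [mul_inv_cancel₀ (Real.sqrt_pos.2 ht).ne', one_mul]

lemma self_mul_msqrtInv : σ * msqrtInv σ = msqrt σ := by
  rw [hσ.msqrt_eq_cfc, hσ.msqrtInv_eq_cfc, hσ.1.self_mul_cfc]
  exact hσ.cfc_congr_of_nonneg fun t _ => by rw [← div_eq_mul_inv, Real.div_sqrt]

lemma range_msqrtInv_le : LinearMap.range (msqrtInv σ).mulVecLin ≤ msupp σ := by
  have h : σ * (msqrtInv σ * msqrtInv σ * msqrtInv σ) = msqrtInv σ := by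
    rw [hσ.msqrtInv_eq_cfc, hσ.1.cfc_mul_cfc, hσ.1.cfc_mul_cfc, hσ.1.self_mul_cfc]
    refine hσ.cfc_congr_of_nonneg fun t ht => ?_
    rcases ht.eq_or_lt with rfl | ht
    · simp
    · have hs : Real.sqrt t ≠ 0 := (Real.sqrt_pos.2 ht).ne'
      nth_rewrite 1 [← Real.mul_self_sqrt ht.le]
      field_simp
  rintro _ ⟨v, rfl⟩
  exact ⟨(msqrtInv σ * msqrtInv σ * msqrtInv σ) *ᵥ v, by simp [mulVec_mulVec, h]⟩

end Matrix.PosSemidef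

section Support

variable {n : Type} [Fintype n] [DecidableEq n]

lemma mul_eq_self_of_msupp_le {X ρ σ : Matrix n n ℂ} (hX : X * σ = σ) (h : msupp ρ ≤ msupp σ) :
    X * ρ = ρ := by
  refine Matrix.toLin'.injective (LinearMap.ext fun v => ?_)
  obtain ⟨y, hy⟩ := h ⟨v, rfl⟩
  simp only [mulVecLin_apply] at hy
  rw [toLin'_apply, toLin'_apply, ← mulVec_mulVec, ← hy, mulVec_mulVec, hX]

lemma Matrix.IsHermitian.eq_zero_of_mem_msupp {A : Matrix n n ℂ} (hA : A.IsHermitian)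
    {v : n → ℂ} (hv : v ∈ msupp A) (h : A *ᵥ v = 0) : v = 0 := by
  obtain ⟨y, rfl⟩ := hv
  simp only [mulVecLin_apply] at h ⊢
  rw [← dotProduct_star_self_eq_zero, star_mulVec, hA.eq, ← dotProduct_mulVec, h,
    dotProduct_zero]

variable {ρ σ : Matrix n n ℂ}

lemma rank_eq_of_msupp_eq (h : msupp ρ = msupp σ) : ρ.rank = σ.rank :=
  congrArg (fun S : Submodule ℂ (n → ℂ) => Module.finrank ℂ S) h

lemma msqrt_mul_conj_msqrtInv_mul_msqrt (hρ : ρ.IsHermitian) (hσ : σ.PosSemidef)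
    (h : msupp ρ ≤ msupp σ) : msqrt σ * (msqrtInv σ * ρ * msqrtInv σ) * msqrt σ = ρ := by
  have hleft : msqrt σ * msqrtInv σ * ρ = ρ :=
    mul_eq_self_of_msupp_le hσ.msqrt_mul_msqrtInv_mul_self h
  have hright : ρ * (msqrtInv σ * msqrt σ) = ρ := by
    simpa [conjTranspose_mul, hρ.eq, hσ.isHermitian_msqrt.eq, hσ.isHermitian_msqrtInv.eq]
      using congrArg conjTranspose hleft
  calc msqrt σ * (msqrtInv σ * ρ * msqrtInv σ) * msqrt σ
      = (msqrt σ * msqrtInv σ * ρ) * (msqrtInv σ * msqrt σ) := by simp only [mul_assoc]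
    _ = ρ := by rw [hleft, hright]

lemma rank_conj_msqrtInv (hρ : ρ.IsHermitian) (hσ : σ.PosSemidef) (h : msupp ρ ≤ msupp σ) :
    (msqrtInv σ * ρ * msqrtInv σ).rank = ρ.rank := by
  refine le_antisymm ?_ ?_
  · exact (rank_mul_le_left _ _).trans (rank_mul_le_right _ _)
  · conv_lhs => rw [← msqrt_mul_conj_msqrtInv_mul_msqrt hρ hσ h]
    exact (rank_mul_le_left _ _).trans (rank_mul_le_right _ _)

lemma msqrt_mulVec_eq_zero_of_conj_mulVec_eq_zero (hρ : ρ.PosSemidef) (hσ : σ.PosSemidef)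
    (h : msupp σ ≤ msupp ρ) {v : n → ℂ} (hv : (msqrtInv σ * ρ * msqrtInv σ) *ᵥ v = 0) :
    msqrt σ *ᵥ v = 0 := by
  set u := msqrtInv σ *ᵥ v with hu_def
  have hρu : ρ *ᵥ u = 0 := by
    refine (hρ.dotProduct_mulVec_zero_iff u).1 ?_
    rw [star_mulVec, hσ.isHermitian_msqrtInv.eq, mulVec_mulVec, ← dotProduct_mulVec,
      mulVec_mulVec, ← mul_assoc, hv, dotProduct_zero]
  have hu : u = 0 := hρ.1.eq_zero_of_mem_msupp (h (hσ.range_msqrtInv_le ⟨v, rfl⟩)) hρu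
  rw [← hσ.self_mul_msqrtInv, ← mulVec_mulVec, ← hu_def, hu, mulVec_zero]

end Support

section Outer

variable {n : Type} [Fintype n]

lemma mul_diagonal_mul_conjTranspose_eq_sum_outer {m : Type*} [Fintype m] [DecidableEq m]
    (W : Matrix n m ℂ) (e : m → ℂ) :
    W * diagonal e * Wᴴ = ∑ x, e x • outer (fun i => W i x) := by
  ext i j
  rw [mul_apply, Matrix.sum_apply]
  refine Finset.sum_congr rfl fun x _ => ?_
  simp only [mul_diagonal, conjTranspose_apply, Matrix.smul_apply, outer, vecMulVec_apply,
    Pi.star_apply, smul_eq_mul]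
  ring

lemma outer_mulVec (u v : n → ℂ) : outer u *ᵥ v = (star u ⬝ᵥ v) • u := by
  rw [outer, vecMulVec_mulVec, op_smul_eq_smul]

lemma outer_ofReal_smul (s : ℝ) (v : n → ℂ) :
    outer ((s : ℂ) • v) = ((s ^ 2 : ℝ) : ℂ) • outer v := by
  ext i j
  simp only [outer, vecMulVec_apply, Pi.smul_apply, Pi.star_apply, Matrix.smul_apply, smul_eq_mul,
    star_mul', Complex.star_def, Complex.conj_ofReal]
  push_cast
  ring

lemma trace_outer (v : n → ℂ) : trace (outer v) = ((∑ i, ‖v i‖ ^ 2 : ℝ) : ℂ) := by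
  simp only [trace, diag, outer, vecMulVec_apply, Pi.star_apply, RCLike.star_def,
    Complex.mul_conj', Complex.ofReal_sum, Complex.ofReal_pow]

lemma isProb_of_eq_sum_outer {ι : Type} [Fintype ι] {A : Matrix n n ℂ} {c : ι → ℝ}
    {φ : ι → n → ℂ} (hc : ∀ x, 0 ≤ c x) (hφ : ∀ x, ∑ i, ‖φ x i‖ ^ 2 = 1)
    (hA : A = ∑ x, (c x : ℂ) • outer (φ x)) (htr : A.trace = 1) : IsProb c := by
  refine ⟨hc, ?_⟩
  simp only [hA, trace_sum, trace_smul, trace_outer, hφ, Complex.ofReal_one, smul_eq_mul,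
    mul_one] at htr
  exact_mod_cast htr

lemma exists_ofReal_smul_unit (v : n → ℂ) (hv : v ≠ 0) :
    ∃ (s : ℝ) (φ : n → ℂ), ∑ i, ‖φ i‖ ^ 2 = 1 ∧ v = (s : ℂ) • φ := by
  set x : EuclideanSpace ℂ n := WithLp.toLp 2 v
  have hx : 0 < ‖x‖ := norm_pos_iff.2 fun h => hv (congrArg WithLp.ofLp h)
  refine ⟨‖x‖, ((‖x‖ : ℂ)⁻¹) • v, ?_, ?_⟩
  · have h := EuclideanSpace.norm_sq_eq ((‖x‖⁻¹ : ℂ) • x)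
    rw [norm_smul, norm_inv, Complex.norm_real, norm_norm, inv_mul_cancel₀ hx.ne'] at h
    simpa using h.symm
  · rw [smul_smul, mul_inv_cancel₀ (by exact_mod_cast hx.ne'), one_smul]

lemma linearIndependent_of_eq_sum_outer {ι : Type*} [Fintype ι] {A : Matrix n n ℂ}
    (c : ι → ℂ) (v : ι → n → ℂ) (hA : A = ∑ x, c x • outer (v x))
    (hcard : Fintype.card ι ≤ A.rank) : LinearIndependent ℂ v := by
  have hrange : LinearMap.range A.mulVecLin ≤ Submodule.span ℂ (Set.range v) := by
    rintro _ ⟨y, rfl⟩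
    rw [mulVecLin_apply, hA, sum_mulVec]
    refine Submodule.sum_mem _ fun x _ => ?_
    rw [smul_mulVec, outer_mulVec, smul_smul]
    exact Submodule.smul_mem _ _ (Submodule.subset_span ⟨x, rfl⟩)
  rw [linearIndependent_iff_card_le_finrank_span]
  exact hcard.trans (Submodule.finrank_mono hrange)

end Outer

section Decomposition

variable {n : Type} [Fintype n] [DecidableEq n] {ρ σ : Matrix n n ℂ}

theorem exists_sum_outer_with_card_of_msupp_eq (hρ : ρ.PosSemidef) (hσ : σ.PosSemidef)
    (h : msupp ρ = msupp σ) :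
    ∃ (w : n → n → ℂ) (μ : n → ℝ), (∀ x, 0 ≤ μ x) ∧ (∀ x, μ x = 0 → w x = 0) ∧
      Fintype.card {x // μ x ≠ 0} = ρ.rank ∧
      ρ = ∑ x, (μ x : ℂ) • outer (w x) ∧ σ = ∑ x, outer (w x) := by
  set M := msqrtInv σ * ρ * msqrtInv σ with hM_def
  have hM : M.PosSemidef := by
    simpa [hσ.isHermitian_msqrtInv.eq] using hρ.mul_mul_conjTranspose_same (msqrtInv σ)
  set U : Matrix n n ℂ := (hM.1.eigenvectorUnitary : Matrix n n ℂ)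
  set W := msqrt σ * U
  have hUU : U * Uᴴ = 1 := Unitary.mul_star_self_of_mem (SetLike.coe_mem _)
  have hWH : Wᴴ = Uᴴ * msqrt σ := by rw [conjTranspose_mul, hσ.isHermitian_msqrt.eq]
  have hcol : ∀ x, (fun i => W i x) = msqrt σ *ᵥ hM.1.eigenvectorBasis x := fun x => by
    ext i
    simp [W, U, mul_apply, mulVec, dotProduct]
  refine ⟨fun x i => W i x, hM.1.eigenvalues, hM.eigenvalues_nonneg, fun x hx => ?_, ?_, ?_, ?_⟩
  · show (fun i => W i x) = 0
    rw [hcol]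
    refine msqrt_mulVec_eq_zero_of_conj_mulVec_eq_zero hρ hσ h.ge ?_
    rw [← hM_def, hM.1.mulVec_eigenvectorBasis, hx, zero_smul]
  · rw [← hM.1.rank_eq_card_non_zero_eigs, rank_conj_msqrtInv hρ.1 hσ h.le]
  · have hρW : ρ = W * diagonal (RCLike.ofReal ∘ hM.1.eigenvalues) * Wᴴ := by
      conv_lhs => rw [← msqrt_mul_conj_msqrtInv_mul_msqrt hρ.1 hσ h.le, ← hM_def,
        hM.1.spectral_theorem, Unitary.conjStarAlgAut_apply]
      simp only [W, hWH, star_eq_conjTranspose, mul_assoc]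
      rfl
    rw [hρW, mul_diagonal_mul_conjTranspose_eq_sum_outer]
    rfl
  · have hσW : σ = W * diagonal (fun _ => 1) * Wᴴ := by
      rw [diagonal_one, mul_one, hWH]
      simp only [W, mul_assoc]
      rw [← mul_assoc U, hUU, one_mul, hσ.msqrt_mul_msqrt]
    rw [hσW, mul_diagonal_mul_conjTranspose_eq_sum_outer]
    simp only [one_smul]

theorem exists_sum_outer_of_msupp_eq (hρ : ρ.PosSemidef) (hσ : σ.PosSemidef)
    (h : msupp ρ = msupp σ) {r : ℕ} (hr : ρ.rank = r) :
    ∃ (w : Fin r → n → ℂ) (μ : Fin r → ℝ), (∀ x, 0 ≤ μ x) ∧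
      ρ = ∑ x, (μ x : ℂ) • outer (w x) ∧ σ = ∑ x, outer (w x) := by
  obtain ⟨w, μ, hμ, hw, hcard, hρw, hσw⟩ := exists_sum_outer_with_card_of_msupp_eq hρ hσ h
  let e : Fin r ↪ n := (Fintype.equivFinOfCardEq (hcard.trans hr)).symm.toEmbedding.trans
    (Function.Embedding.subtype _)
  have hsum : ∀ f : n → Matrix n n ℂ, (∀ x, μ x = 0 → f x = 0) → ∑ x, f x = ∑ y, f (e y) := by
    refine fun f hf => (Fintype.sum_of_injective e e.injective _ _ (fun x hx => hf x ?_)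
      fun _ => rfl).symm
    by_contra hμx
    exact hx ⟨Fintype.equivFinOfCardEq (hcard.trans hr) ⟨x, hμx⟩, by simp [e]⟩
  refine ⟨w ∘ e, μ ∘ e, fun y => hμ (e y), ?_, ?_⟩
  · rw [hρw, hsum _ fun x hx => by rw [hx, Complex.ofReal_zero, zero_smul]]
    rfl
  · rw [hσw, hsum _ fun x hx => by ext; simp [hw x hx, outer]]
    rfl

end Decomposition

/-- two density operators with equal support of rank `r` can be written
as mixtures of a common family of `r` linearly independent unit vectors. -/
theorem stmt_1 {d : ℕ} (ρ σ : Matrix (Fin d) (Fin d) ℂ)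
    (hρ : IsDensity ρ) (hσ : IsDensity σ)
    (hsupp : msupp ρ = msupp σ) (r : ℕ) (hr : ρ.rank = r) :
    ∃ (φ : Fin r → (Fin d → ℂ)) (p q : Fin r → ℝ),
      LinearIndependent ℂ φ ∧ (∀ x, ∑ i, ‖φ x i‖ ^ 2 = 1) ∧
      IsProb p ∧ IsProb q ∧
      ρ = ∑ x, (p x : ℂ) • outer (φ x) ∧
      σ = ∑ x, (q x : ℂ) • outer (φ x) ∧
      (∀ t : ℝ, (t : ℂ) • ρ + ((1 - t : ℝ) : ℂ) • σ =
        ∑ x, ((t * p x + (1 - t) * q x : ℝ) : ℂ) • outer (φ x)) := by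
  obtain ⟨hρ, hρtr⟩ := hρ
  obtain ⟨hσ, hσtr⟩ := hσ
  have hrank : σ.rank = r := (rank_eq_of_msupp_eq hsupp).symm.trans hr
  obtain ⟨w, μ, hμ, hρw, hσw⟩ := exists_sum_outer_of_msupp_eq hρ hσ hsupp hr
  have hw : LinearIndependent ℂ w :=
    linearIndependent_of_eq_sum_outer (fun _ => 1) w (by simpa using hσw) (by simp [hrank])
  choose s φ hφ hwφ using fun x => exists_ofReal_smul_unit (w x) (hw.ne_zero x)
  have hρφ : ρ = ∑ x, ((μ x * s x ^ 2 : ℝ) : ℂ) • outer (φ x) := by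
    simp only [hρw, hwφ, outer_ofReal_smul, smul_smul, Complex.ofReal_mul]
  have hσφ : σ = ∑ x, ((s x ^ 2 : ℝ) : ℂ) • outer (φ x) := by
    simp only [hσw, hwφ, outer_ofReal_smul]
  refine ⟨φ, fun x => μ x * s x ^ 2, fun x => s x ^ 2,
    linearIndependent_of_eq_sum_outer _ φ hσφ (by simp [hrank]), hφ,
    isProb_of_eq_sum_outer (fun x => mul_nonneg (hμ x) (sq_nonneg _)) hφ hρφ hρtr,
    isProb_of_eq_sum_outer (fun x => sq_nonneg _) hφ hσφ hσtr, hρφ, hσφ, fun t => ?_⟩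
  rw [hρφ, hσφ, Finset.smul_sum, Finset.smul_sum, ← Finset.sum_add_distrib]
  refine Finset.sum_congr rfl fun x _ => ?_
  rw [smul_smul, smul_smul, ← add_smul]
  congr 1
  push_cast
  ring
end

section
/- For classical probability distributions $p, q$ on a finite set with $\mathrm{supp}\,p \subseteq \mathrm{supp}\,q$, letting $p_t := t p + (1-t)q$ for $t \in [0,1]$ and $J_{p_t} := \sum_x \frac{(p(x)-q(x))^2}{p_t(x)}$ the Fisher information of this one-parameter family, one has $\mathrm{D}(p\|q) = \int_0^1 \int_0^t J_{p_s}\, ds\, dt$. -/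
open Matrix BigOperators Filter
open scoped ComplexOrder

/-! The map `t ↦ D(p_t‖q)` vanishes together with its slope
`∑ₓ (p x - q x) log (p_t x / q x)` at `t = 0`, and its second derivative is the Fisher information
`J_{p_t}`, so the theorem is Taylor's formula with integral remainder for it, checked
coordinatewise. Although the slope blows up at `t = 1` where `p x = 0 < q x`, it stays integrable
there, being on `[0, 1)` the nonnegative derivative of a function continuous on `[0, 1]`. -/

open MeasureTheory Set Real

/- The summands of `J_{p_s}`, of `d/dt D(p_t‖q)` and of `D(p_t‖q) - 1` at a point where `p = a` and
`q = b`. -/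

noncomputable def fisherTerm (a b s : ℝ) : ℝ :=
  if 0 < s * a + (1 - s) * b then (a - b) ^ 2 / (s * a + (1 - s) * b) else 0

noncomputable def relEntSlope (a b t : ℝ) : ℝ :=
  (a - b) * (log (t * a + (1 - t) * b) - log b)

noncomputable def relEntTerm (a b t : ℝ) : ℝ :=
  (t * a + (1 - t) * b) * (log (t * a + (1 - t) * b) - log b) - (t * a + (1 - t) * b)

@[simp]
lemma fisherTerm_self (a : ℝ) : fisherTerm a a = 0 := by
  funext s
  simp [fisherTerm]

@[simp]
lemma relEntSlope_self (a : ℝ) : relEntSlope a a = 0 := by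
  funext t
  simp [relEntSlope]

section Coordinate

variable {a b : ℝ}

lemma mix_pos (ha : 0 ≤ a) (hb : 0 < b) {s : ℝ} (hs0 : 0 ≤ s) (hs1 : s < 1) :
    0 < s * a + (1 - s) * b := by
  nlinarith

lemma hasDerivAt_mix (a b s : ℝ) : HasDerivAt (fun u => u * a + (1 - u) * b) (a - b) s := by
  refine (((hasDerivAt_id s).mul_const a).add
    (((hasDerivAt_id s).const_sub 1).mul_const b)).congr_deriv ?_
  ring

lemma hasDerivAt_relEntSlope {s : ℝ} (hs : 0 < s * a + (1 - s) * b) :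
    HasDerivAt (relEntSlope a b) (fisherTerm a b s) s := by
  refine ((((hasDerivAt_mix a b s).log hs.ne').sub_const (log b)).const_mul (a - b)).congr_deriv ?_
  rw [fisherTerm, if_pos hs]
  ring

lemma hasDerivAt_relEntTerm {t : ℝ} (ht : t * a + (1 - t) * b ≠ 0) :
    HasDerivAt (relEntTerm a b) (relEntSlope a b t) t := by
  have hf := hasDerivAt_mix a b t
  refine ((hf.mul ((hf.log ht).sub_const (log b))).sub hf).congr_deriv ?_
  rw [relEntSlope, mul_div_cancel₀ _ ht]
  ring

lemma continuous_relEntTerm (a b : ℝ) : Continuous (relEntTerm a b) := by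
  unfold relEntTerm
  simp only [mul_sub]
  have hf : Continuous fun u : ℝ => u * a + (1 - u) * b := by fun_prop
  exact ((continuous_mul_log.comp hf).sub (hf.mul continuous_const)).sub hf

lemma relEntSlope_nonneg (ha : 0 ≤ a) (hb : 0 < b) {t : ℝ} (ht0 : 0 ≤ t) (ht1 : t < 1) :
    0 ≤ relEntSlope a b t := by
  have hf := mix_pos ha hb ht0 ht1
  rcases le_total a b with hab | hab
  · refine mul_nonneg_of_nonpos_of_nonpos (by linarith) (sub_nonpos.2 (log_le_log hf ?_))
    nlinarith
  · refine mul_nonneg (by linarith) (sub_nonneg.2 (log_le_log hb ?_))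
    nlinarith

lemma intervalIntegrable_fisherTerm (ha : 0 ≤ a) (hb : 0 ≤ b) (hsupp : b = 0 → a = 0)
    {t : ℝ} (ht0 : 0 ≤ t) (ht1 : t < 1) : IntervalIntegrable (fisherTerm a b) volume 0 t := by
  rcases hb.eq_or_lt with rfl | hb
  · obtain rfl := hsupp rfl
    simpa using IntervalIntegrable.zero
  have hpos : ∀ s ∈ uIcc 0 t, 0 < s * a + (1 - s) * b := fun s hs => by
    rw [uIcc_of_le ht0] at hs
    exact mix_pos ha hb hs.1 (hs.2.trans_lt ht1)
  refine ContinuousOn.intervalIntegrable ?_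
  refine ((continuousOn_const (c := (a - b) ^ 2)).div (by fun_prop)
    fun s hs => (hpos s hs).ne').congr fun s hs => ?_
  exact if_pos (hpos s hs)

lemma integral_fisherTerm (ha : 0 ≤ a) (hb : 0 ≤ b) (hsupp : b = 0 → a = 0)
    {t : ℝ} (ht0 : 0 ≤ t) (ht1 : t < 1) :
    ∫ s in (0 : ℝ)..t, fisherTerm a b s = relEntSlope a b t := by
  rcases hb.eq_or_lt with rfl | hb'
  · obtain rfl := hsupp rfl
    simp
  have hderiv : ∀ s ∈ uIcc 0 t, HasDerivAt (relEntSlope a b) (fisherTerm a b s) s := by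
    intro s hs
    rw [uIcc_of_le ht0] at hs
    exact hasDerivAt_relEntSlope (mix_pos ha hb' hs.1 (hs.2.trans_lt ht1))
  rw [intervalIntegral.integral_eq_sub_of_hasDerivAt hderiv
    (intervalIntegrable_fisherTerm ha hb hsupp ht0 ht1)]
  simp [relEntSlope]

lemma intervalIntegrable_relEntSlope (ha : 0 ≤ a) (hb : 0 ≤ b) (hsupp : b = 0 → a = 0) :
    IntervalIntegrable (relEntSlope a b) volume 0 1 := by
  rcases hb.eq_or_lt with rfl | hb
  · obtain rfl := hsupp rfl
    simpa using IntervalIntegrable.zero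
  refine intervalIntegral.intervalIntegrable_deriv_of_nonneg
    (continuous_relEntTerm a b).continuousOn (fun t ht => ?_) (fun t ht => ?_)
  · simp only [zero_le_one, min_eq_left, max_eq_right, mem_Ioo] at ht
    exact hasDerivAt_relEntTerm (mix_pos ha hb ht.1.le ht.2).ne'
  · simp only [zero_le_one, min_eq_left, max_eq_right, mem_Ioo] at ht
    exact relEntSlope_nonneg ha hb ht.1.le ht.2

lemma integral_relEntSlope (ha : 0 ≤ a) (hb : 0 ≤ b) (hsupp : b = 0 → a = 0) :
    ∫ t in (0 : ℝ)..1, relEntSlope a b t = a * log (a / b) - (a - b) := by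
  rcases hb.eq_or_lt with rfl | hb'
  · obtain rfl := hsupp rfl
    simp
  rw [intervalIntegral.integral_eq_sub_of_hasDerivAt_of_le zero_le_one
    (continuous_relEntTerm a b).continuousOn
    (fun t ht => hasDerivAt_relEntTerm (mix_pos ha hb' ht.1.le ht.2).ne')
    (intervalIntegrable_relEntSlope ha hb hsupp)]
  rcases ha.eq_or_lt with rfl | ha
  · simp [relEntTerm]
  · rw [relEntTerm, relEntTerm, log_div ha.ne' hb'.ne']
    ring_nf

end Coordinate

/-- the classical relative entropy is the double integral of the Fisher
information along the mixture family `p_t = t p + (1-t) q`. -/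
theorem stmt_9 {m : ℕ} (p q : Fin m → ℝ) (hp : IsProb p) (hq : IsProb q)
    (hsupp : ∀ x, q x = 0 → p x = 0) :
    classRelEnt p q =
      ∫ t in (0:ℝ)..1, ∫ s in (0:ℝ)..t,
        (∑ x, if 0 < s * p x + (1 - s) * q x then
          (p x - q x) ^ 2 / (s * p x + (1 - s) * q x) else 0) := by
  obtain ⟨hp0, hp1⟩ := hp
  obtain ⟨hq0, hq1⟩ := hq
  have inner : ∀ t ∈ Ioo (0 : ℝ) 1, ∫ s in (0 : ℝ)..t, ∑ x, fisherTerm (p x) (q x) s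
      = ∑ x, relEntSlope (p x) (q x) t := fun t ht => by
    rw [intervalIntegral.integral_finsetSum fun x _ =>
      intervalIntegrable_fisherTerm (hp0 x) (hq0 x) (hsupp x) ht.1.le ht.2]
    exact Finset.sum_congr rfl fun x _ =>
      integral_fisherTerm (hp0 x) (hq0 x) (hsupp x) ht.1.le ht.2
  calc classRelEnt p q = ∑ x, (p x * log (p x / q x) - (p x - q x)) := by
        simp [classRelEnt, Finset.sum_sub_distrib, hp1, hq1]
    _ = ∑ x, ∫ t in (0 : ℝ)..1, relEntSlope (p x) (q x) t :=
        Finset.sum_congr rfl fun x _ => (integral_relEntSlope (hp0 x) (hq0 x) (hsupp x)).symm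
    _ = ∫ t in (0 : ℝ)..1, ∑ x, relEntSlope (p x) (q x) t :=
        (intervalIntegral.integral_finsetSum fun x _ =>
          intervalIntegrable_relEntSlope (hp0 x) (hq0 x) (hsupp x)).symm
    _ = _ := by
        refine intervalIntegral.integral_congr_ae ((Measure.ae_ne volume 1).mono fun t ht1 ht => ?_)
        rw [uIoc_of_le zero_le_one] at ht
        exact (inner t ⟨ht.1, ht.2.lt_of_ne ht1⟩).symm
end

section
/- Let $\{\rho_t\}_{t\in[0,1]}$ with $\rho_t = \sum_{x=1}^r p_t(x)|\phi_x\rangle\langle\phi_x|$ be an RLD-parallel family, where $\{\phi_x\}$ are linearly independent unit vectors and $p_t$ smooth probability distributions with $p_t(x) > 0$. Then the RLD Fisher information of the quantum family equals the classical Fisher information of $\{p_t\}$: $J^R_{\rho_t} = J_{p_t} = \sum_x \frac{(\dot p_t(x))^2}{p_t(x)}$. -/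
open Matrix BigOperators Filter
open scoped ComplexOrder

/-!
With `N` the matrix whose columns are the `φ x`, the family and its derivative factor as
`ρ = N D Nᴴ` and `ρ̇ = N Q Nᴴ` with `D = diag p_t`, `Q = diag ṗ_t`. Linear independence of the `φ x`
gives a left inverse of `N`, and then the generalized-inverse identity `ρ ρ⁺ ρ = ρ` forces
`Nᴴ ρ⁺ N = D⁻¹`. Hence `tr (ρ̇ ρ⁺ ρ̇) = tr (Q D⁻¹ Q NᴴN) = ∑ ṗ_t(x)² / p_t(x) ‖φ x‖²`, and the
`φ x` are unit vectors.
-/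

theorem Matrix.exists_mul_eq_one_of_linearIndependent_col {K m n : Type*} [Field K]
    [Fintype m] [DecidableEq m] [Fintype n] [DecidableEq n] {N : Matrix m n K}
    (hN : LinearIndependent K N.col) : ∃ L : Matrix n m K, L * N = 1 := by
  obtain ⟨g, hg⟩ := N.mulVecLin.exists_leftInverse_of_injective
    (LinearMap.ker_eq_bot.mpr (Matrix.mulVec_injective_iff.mpr hN))
  refine ⟨LinearMap.toMatrix' g, ?_⟩
  rw [← LinearMap.toMatrix'_toLin' N, ← LinearMap.toMatrix'_comp, Matrix.toLin'_apply', hg,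
    LinearMap.toMatrix'_id]

theorem Matrix.IsHermitian.mul_mpinv_mul_self {n : Type} [Fintype n] [DecidableEq n]
    {A : Matrix n n ℂ} (hA : A.IsHermitian) : A * mpinv A * A = A := by
  have hcont (f : ℝ → ℝ) : ContinuousOn f (spectrum ℝ A) := A.finite_real_spectrum.continuousOn f
  set f : ℝ → ℝ := fun t => if t = 0 then 0 else t⁻¹
  calc A * mpinv A * A = cfc id A * cfc f A * cfc id A := by
        rw [cfc_id ℝ A, mpinv, matFun, dif_pos hA, hA.cfc_eq]
    _ = cfc (fun t => id t * f t * id t) A := by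
        rw [← cfc_mul _ _ A (hcont _) (hcont _), ← cfc_mul _ _ A (hcont _) (hcont _)]
    _ = cfc id A := by
        congr 1
        ext t
        by_cases ht : t = 0 <;> simp [f, ht]
    _ = A := cfc_id ℝ A

theorem Matrix.conjTranspose_mul_mul_eq_of_mul_eq_one {R m n : Type*} [CommRing R] [StarRing R]
    [Fintype m] [Fintype n] [DecidableEq n] {N : Matrix m n R} {L : Matrix n m R}
    {D E : Matrix n n R} {P : Matrix m m R} (hL : L * N = 1) (hE : E * D = 1)
    (hP : N * D * Nᴴ * P * (N * D * Nᴴ) = N * D * Nᴴ) : Nᴴ * P * N = E := by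
  have hLH : Nᴴ * Lᴴ = 1 := by rw [← conjTranspose_mul, hL, conjTranspose_one]
  have hDE : D * E = 1 := mul_eq_one_comm.mp hE
  have hDXD : D * (Nᴴ * P * N) * D = D := by
    calc D * (Nᴴ * P * N) * D
        = L * N * D * (Nᴴ * P * N) * D * (Nᴴ * Lᴴ) := by
          rw [hL, hLH, Matrix.one_mul, Matrix.mul_one]
      _ = L * (N * D * Nᴴ * P * (N * D * Nᴴ)) * Lᴴ := by simp only [Matrix.mul_assoc]
      _ = L * N * D * (Nᴴ * Lᴴ) := by rw [hP]; simp only [Matrix.mul_assoc]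
      _ = D := by rw [hL, hLH, Matrix.one_mul, Matrix.mul_one]
  calc Nᴴ * P * N = E * D * (Nᴴ * P * N) * (D * E) := by
        rw [hE, hDE, Matrix.one_mul, Matrix.mul_one]
    _ = E * (D * (Nᴴ * P * N) * D) * E := by simp only [Matrix.mul_assoc]
    _ = E := by rw [hDXD, hE, Matrix.one_mul]

theorem JR_mul_mul_conjTranspose {m n : Type} [Fintype m] [DecidableEq m] [Fintype n]
    [DecidableEq n] {N : Matrix m n ℂ} (hN : LinearIndependent ℂ N.col) {D E : Matrix n n ℂ}
    (hD : D.IsHermitian) (hE : E * D = 1) (Q : Matrix n n ℂ) :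
    JR (N * D * Nᴴ) (N * Q * Nᴴ) = (trace (Q * E * Q * (Nᴴ * N))).re := by
  obtain ⟨L, hL⟩ := Matrix.exists_mul_eq_one_of_linearIndependent_col hN
  have hNPN : Nᴴ * mpinv (N * D * Nᴴ) * N = E :=
    Matrix.conjTranspose_mul_mul_eq_of_mul_eq_one hL hE
      (isHermitian_mul_mul_conjTranspose N hD).mul_mpinv_mul_self
  rw [JR, show N * Q * Nᴴ * mpinv (N * D * Nᴴ) * (N * Q * Nᴴ)
      = N * (Q * (Nᴴ * mpinv (N * D * Nᴴ) * N) * Q * Nᴴ) by simp only [Matrix.mul_assoc],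
    trace_mul_comm, hNPN, Matrix.mul_assoc]

theorem Matrix.trace_diagonal_mul {R n : Type*} [Fintype n] [DecidableEq n]
    [NonUnitalNonAssocSemiring R] (a : n → R) (M : Matrix n n R) :
    trace (diagonal a * M) = ∑ i, a i * M i i := by
  simp [trace, diagonal_mul]

theorem sum_smul_outer_eq {ι n : Type} [Fintype ι] [DecidableEq ι] [Fintype n]
    (φ : ι → n → ℂ) (c : ι → ℂ) :
    ∑ x, c x • outer (φ x) = (of φ)ᵀ * diagonal c * (of φ)ᵀᴴ := by
  ext i j
  rw [mul_apply]
  simp only [outer, Matrix.sum_apply, Matrix.smul_apply, vecMulVec_apply, mul_diagonal,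
    transpose_apply, conjTranspose_apply, of_apply, Pi.star_apply, smul_eq_mul]
  exact Finset.sum_congr rfl fun _ _ => by ring

theorem Matrix.conjTranspose_mul_self_apply_self {m n : Type*} [Fintype m]
    (N : Matrix m n ℂ) (x : n) : (Nᴴ * N) x x = ((∑ i, ‖N i x‖ ^ 2 : ℝ) : ℂ) := by
  simp [mul_apply, RCLike.conj_mul]

theorem stmt_10_general {d r : ℕ} (φ : Fin r → (Fin d → ℂ)) (p : ℝ → Fin r → ℝ)
    (hind : LinearIndependent ℂ φ) (hunit : ∀ x, ∑ i, ‖φ x i‖ ^ 2 = 1)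
    (hpos : ∀ t x, 0 < p t x) (t : ℝ) :
    JR (∑ x, ((p t x : ℝ) : ℂ) • outer (φ x))
       (∑ x, ((deriv (fun s => p s x) t : ℝ) : ℂ) • outer (φ x))
      = ∑ x, (deriv (fun s => p s x) t) ^ 2 / p t x := by
  have hD : (diagonal fun x => ((p t x : ℝ) : ℂ)).IsHermitian := by
    simp [IsHermitian, diagonal_conjTranspose]
  have hE :
      diagonal (fun x => ((p t x : ℝ) : ℂ)⁻¹) * diagonal (fun x => ((p t x : ℝ) : ℂ)) = 1 := by
    rw [diagonal_mul_diagonal, ← diagonal_one]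
    exact congrArg diagonal (funext fun x => inv_mul_cancel₀ (by exact_mod_cast (hpos t x).ne'))
  rw [sum_smul_outer_eq, sum_smul_outer_eq, JR_mul_mul_conjTranspose (N := (of φ)ᵀ) hind hD hE,
    diagonal_mul_diagonal, diagonal_mul_diagonal, trace_diagonal_mul]
  simp only [conjTranspose_mul_self_apply_self, transpose_apply, of_apply, hunit,
    Complex.ofReal_one, mul_one, Complex.re_sum]
  refine Finset.sum_congr rfl fun x _ => ?_
  rw [← Complex.ofReal_inv, ← Complex.ofReal_mul, ← Complex.ofReal_mul, Complex.ofReal_re]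
  ring

/-- for an RLD-parallel family `ρ_t = ∑ p_t(x) |φ_x⟩⟨φ_x|`, the RLD
Fisher information equals the classical Fisher information of `{p_t}`. -/
theorem stmt_10 {d r : ℕ} (φ : Fin r → (Fin d → ℂ)) (p : ℝ → Fin r → ℝ)
    (hind : LinearIndependent ℂ φ) (hunit : ∀ x, ∑ i, ‖φ x i‖ ^ 2 = 1)
    (hprob : ∀ t, IsProb (p t)) (hpos : ∀ t x, 0 < p t x)
    (hdiff : ∀ x, Differentiable ℝ (fun t => p t x)) (t : ℝ) :
    JR (∑ x, ((p t x : ℝ) : ℂ) • outer (φ x))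
       (∑ x, ((deriv (fun s => p s x) t : ℝ) : ℂ) • outer (φ x))
      = ∑ x, (deriv (fun s => p s x) t) ^ 2 / p t x :=
  stmt_10_general φ p hind hunit hpos t
end

section
/- (Reverse estimation bound) Let $\{\rho_\theta\}$ be a smooth one-parameter family of density operators on a finite-dimensional Hilbert space with strictly positive $\rho_\theta$. For every classical family $\{p_\theta\}$ of probability distributions on a finite set and every classical-to-quantum channel $\Phi$ with $\Phi(p_\theta) = \rho_\theta$ and $\Phi(dp_\theta/d\theta) = d\rho_\theta/d\theta$ at a point $\theta$, the classical Fisher information satisfies $J_{p_\theta} \geq J^R_{\rho_\theta}$, where $J^R$ is the RLD Fisher information. -/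
open Matrix BigOperators Filter
open scoped ComplexOrder

/-! With `K = ρ⁻¹ X`, `a_x = dp_x / √p_x` and `b_x = √p_x`, the positive operator
`∑ₓ (a_x - b_x K)† Φ_x (a_x - b_x K)` expands to `∑ₓ (dp_x² / p_x) Φ_x - X ρ⁻¹ X`, because
`∑ₓ p_x Φ_x = ρ` and `∑ₓ dp_x Φ_x = X`. Taking traces, with `tr Φ_x = 1`, gives
`J_p ≥ tr X ρ⁻¹ X = J^R_ρ`. -/

section

variable {n : Type} [Fintype n]

lemma re_trace_le_of_posSemidef_sub {A B : Matrix n n ℂ} (h : (A - B).PosSemidef) :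
    B.trace.re ≤ A.trace.re := by
  have := (Complex.le_def.mp h.trace_nonneg).1
  rw [trace_sub, Complex.sub_re, Complex.zero_re] at this
  linarith

variable [DecidableEq n]

lemma mpinv_eq_inv {ρ : Matrix n n ℂ} (hρ : ρ.PosDef) : mpinv ρ = ρ⁻¹ := by
  have hunit := hρ.isUnit
  rw [mpinv, matFun, dif_pos hρ.isHermitian, ← hρ.isHermitian.cfc_eq,
    nonsing_inv_eq_ringInverse]
  calc cfc (fun t : ℝ => if t = 0 then 0 else t⁻¹) ρ = cfc (fun t : ℝ => t⁻¹) ρ :=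
        cfc_congr fun t ht => if_neg fun h => spectrum.zero_notMem ℝ hunit (h ▸ ht)
    _ = _ := cfc_ringInverse_id ρ hunit hρ.isHermitian

variable {ι : Type*} [Fintype ι]

lemma sum_conjTranspose_mul_mul_eq (Φ : ι → Matrix n n ℂ) (a b : ι → ℝ) (K : Matrix n n ℂ) :
    ∑ x, ((a x : ℂ) • 1 - (b x : ℂ) • K)ᴴ * Φ x * ((a x : ℂ) • 1 - (b x : ℂ) • K)
      = ∑ x, ((a x ^ 2 : ℝ) : ℂ) • Φ x - (∑ x, ((a x * b x : ℝ) : ℂ) • Φ x) * K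
        - Kᴴ * ∑ x, ((a x * b x : ℝ) : ℂ) • Φ x
        + Kᴴ * (∑ x, ((b x ^ 2 : ℝ) : ℂ) • Φ x) * K := by
  simp only [Finset.sum_mul, Finset.mul_sum, ← Finset.sum_sub_distrib, ← Finset.sum_add_distrib]
  refine Finset.sum_congr rfl fun x _ => ?_
  simp only [conjTranspose_sub, conjTranspose_smul, conjTranspose_one, RCLike.star_def,
    Complex.conj_ofReal, sub_mul, mul_sub, smul_mul_assoc, mul_smul_comm, one_mul, mul_one,
    Complex.ofReal_mul, Complex.ofReal_pow, mul_assoc]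
  module

theorem posSemidef_sum_sq_div_smul_sub_mul_inv_mul {Φ : ι → Matrix n n ℂ}
    (hΦ : ∀ x, (Φ x).PosSemidef) {p dp : ι → ℝ} (hp : ∀ x, 0 ≤ p x)
    (hdp : ∀ x, p x = 0 → dp x = 0) {ρ X : Matrix n n ℂ} (hρ : ρ.PosDef) (hX : X.IsHermitian)
    (h1 : ∑ x, (p x : ℂ) • Φ x = ρ) (h2 : ∑ x, (dp x : ℂ) • Φ x = X) :
    (∑ x, ((if p x = 0 then 0 else dp x ^ 2 / p x : ℝ) : ℂ) • Φ x - X * ρ⁻¹ * X).PosSemidef := by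
  set a : ι → ℝ := fun x => dp x / √(p x)
  set b : ι → ℝ := fun x => √(p x)
  have ha x : a x ^ 2 = if p x = 0 then 0 else dp x ^ 2 / p x := by
    split_ifs with h
    · simp [a, h]
    · simp [a, div_pow, Real.sq_sqrt (hp x)]
  have hab x : a x * b x = dp x := by
    by_cases h : p x = 0
    · simp [a, b, h, hdp x h]
    · exact div_mul_cancel₀ _ (Real.sqrt_ne_zero'.mpr ((hp x).lt_of_ne' h))
  have hb x : b x ^ 2 = p x := Real.sq_sqrt (hp x)
  have hK : (ρ⁻¹ * X)ᴴ = X * ρ⁻¹ := by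
    rw [conjTranspose_mul, hX.eq, hρ.isHermitian.inv.eq]
  have hρρ : ρ * ρ⁻¹ = 1 := mul_nonsing_inv ρ ((isUnit_iff_isUnit_det ρ).mp hρ.isUnit)
  have key := sum_conjTranspose_mul_mul_eq Φ a b (ρ⁻¹ * X)
  simp only [ha, hab, hb, h1, h2, hK] at key
  rw [mul_assoc (X * ρ⁻¹), ← mul_assoc ρ, hρρ, one_mul, ← mul_assoc, sub_add_cancel] at key
  rw [← key]
  exact posSemidef_sum _ fun x _ => (hΦ x).conjTranspose_mul_mul_same _

end

theorem stmt_11_general {d m : ℕ} (ρ X : Matrix (Fin d) (Fin d) ℂ)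
    (hpd : ρ.PosDef) (hX : X.IsHermitian)
    (p dp : Fin m → ℝ) (hp : IsProb p)
    (hfin : ∀ x, p x = 0 → dp x = 0)
    (Φ : Fin m → Matrix (Fin d) (Fin d) ℂ) (hΦ : ∀ x, IsDensity (Φ x))
    (h1 : ∑ x, (p x : ℂ) • Φ x = ρ) (h2 : ∑ x, (dp x : ℂ) • Φ x = X) :
    (∑ x, if p x = 0 then 0 else (dp x) ^ 2 / p x) ≥ JR ρ X := by
  have hle := re_trace_le_of_posSemidef_sub <|
    posSemidef_sum_sq_div_smul_sub_mul_inv_mul (fun x => (hΦ x).1) hp.1 hfin hpd hX h1 h2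
  have htr : (∑ x, ((if p x = 0 then 0 else dp x ^ 2 / p x : ℝ) : ℂ) • Φ x).trace
      = ((∑ x, if p x = 0 then 0 else dp x ^ 2 / p x : ℝ) : ℂ) := by
    simp only [trace_sum, trace_smul, (hΦ _).2, smul_eq_mul, mul_one, Complex.ofReal_sum]
  rwa [htr, Complex.ofReal_re, ← mpinv_eq_inv hpd] at hle

/-- (reverse estimation bound) for any tangent reverse estimation
`(Φ, {p, dp})` of a strictly positive family `{ρ, X}` at a point, the classical Fisher
information is at least the RLD Fisher information. -/
theorem stmt_11 {d m : ℕ} (ρ X : Matrix (Fin d) (Fin d) ℂ)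
    (hρ : IsDensity ρ) (hpd : ρ.PosDef) (hX : X.IsHermitian)
    (p dp : Fin m → ℝ) (hp : IsProb p) (hdp : ∑ x, dp x = 0)
    (hfin : ∀ x, p x = 0 → dp x = 0)
    (Φ : Fin m → Matrix (Fin d) (Fin d) ℂ) (hΦ : ∀ x, IsDensity (Φ x))
    (h1 : ∑ x, (p x : ℂ) • Φ x = ρ) (h2 : ∑ x, (dp x : ℂ) • Φ x = X) :
    (∑ x, if p x = 0 then 0 else (dp x) ^ 2 / p x) ≥ JR ρ X :=
  stmt_11_general ρ X hpd hX p dp hp hfin Φ hΦ h1 h2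
end

section
/- The RLD Fisher information is monotone under CPTP maps: for a smooth one-parameter family $\{\rho_\theta\}$ of strictly positive density operators and any CPTP map $\Lambda$ (such that $\Lambda(\rho_\theta)$ admits an RLD), $J^R_{\Lambda(\rho_\theta)} \leq J^R_{\rho_\theta}$. -/
open Matrix BigOperators Filter
open scoped ComplexOrder

/-!
Put `σ = Λ ρ`, `A = Λ X`, `Y = A σ⁺` and let `Λ*` be the dual Kraus map, so `W = Λ*(Y)`
satisfies `tr(W X) = tr(Y A)`. Since `σ⁺ σ σ⁺ = σ⁺`, both `tr(Y A)` and `tr(Y σ Yᴴ)` equal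
`J^R_σ`. The Kadison–Schwarz inequality `Λ*(Y)ᴴ Λ*(Y) ≤ Λ*(Yᴴ Y)` for the unital map `Λ*`,
paired with `ρ`, gives `tr(W ρ Wᴴ) ≤ tr(Y σ Yᴴ) = J^R_σ`, while positivity of
`(X ρ⁻¹ - W) ρ (X ρ⁻¹ - W)ᴴ` gives `2 Re tr(W X) - tr(W ρ Wᴴ) ≤ J^R_ρ`.
Hence `J^R_σ = 2 J^R_σ - J^R_σ ≤ J^R_ρ`.
-/

namespace Matrix

variable {𝕜 : Type*} [RCLike 𝕜] {m n ι : Type*} [Fintype ι]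

theorem PosSemidef.trace_mul_nonneg [Fintype n] [DecidableEq n] {A B : Matrix n n 𝕜}
    (hA : A.PosSemidef) (hB : B.PosSemidef) : 0 ≤ (A * B).trace := by
  open scoped MatrixOrder in
  obtain ⟨C, rfl⟩ := CStarAlgebra.nonneg_iff_eq_star_mul_self.mp hA.nonneg
  rw [star_eq_conjTranspose, Matrix.mul_assoc, trace_mul_comm, Matrix.mul_assoc,
    ← Matrix.mul_assoc]
  exact (hB.mul_mul_conjTranspose_same C).trace_nonneg

def krausMap [Fintype n] (K : ι → Matrix m n 𝕜) (A : Matrix n n 𝕜) : Matrix m m 𝕜 :=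
  ∑ i, K i * A * (K i)ᴴ

def krausDual [Fintype m] (K : ι → Matrix m n 𝕜) (B : Matrix m m 𝕜) : Matrix n n 𝕜 :=
  ∑ i, (K i)ᴴ * B * K i

variable (K : ι → Matrix m n 𝕜)

theorem PosSemidef.krausMap [Fintype m] [Fintype n] {A : Matrix n n 𝕜} (hA : A.PosSemidef) :
    (krausMap K A).PosSemidef :=
  posSemidef_sum _ fun i _ => hA.mul_mul_conjTranspose_same (K i)

theorem IsHermitian.krausMap [Fintype n] {A : Matrix n n 𝕜} (hA : A.IsHermitian) :
    (krausMap K A).IsHermitian :=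
  isSelfAdjoint_sum _ fun i _ => isHermitian_mul_mul_conjTranspose (K i) hA

theorem trace_mul_krausMap [Fintype m] [Fintype n] (B : Matrix m m 𝕜) (A : Matrix n n 𝕜) :
    (B * krausMap K A).trace = (krausDual K B * A).trace := by
  simp only [krausMap, krausDual, Finset.mul_sum, Finset.sum_mul, trace_sum]
  refine Finset.sum_congr rfl fun i _ => ?_
  rw [← Matrix.mul_assoc, ← Matrix.mul_assoc, trace_mul_comm, ← Matrix.mul_assoc,
    ← Matrix.mul_assoc]

theorem posSemidef_krausDual_sub_conjTranspose_mul_self [Fintype m] [Fintype n] [DecidableEq n]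
    (hK : ∑ i, (K i)ᴴ * K i = 1) (B : Matrix m m 𝕜) :
    (krausDual K (Bᴴ * B) - (krausDual K B)ᴴ * krausDual K B).PosSemidef := by
  set W := krausDual K B
  have hW : W = ∑ i, (K i)ᴴ * (B * K i) := by simp only [W, krausDual, Matrix.mul_assoc]
  have hW' : Wᴴ = ∑ i, (B * K i)ᴴ * K i := by
    simp [W, krausDual, conjTranspose_sum, conjTranspose_mul, Matrix.mul_assoc]
  suffices h : krausDual K (Bᴴ * B) - Wᴴ * W = ∑ i, (B * K i - K i * W)ᴴ * (B * K i - K i * W) from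
    h ▸ posSemidef_sum _ fun i _ => posSemidef_conjTranspose_mul_self _
  have hexp : ∀ i, (B * K i - K i * W)ᴴ * (B * K i - K i * W) =
      (K i)ᴴ * (Bᴴ * B) * K i - (B * K i)ᴴ * K i * W - Wᴴ * ((K i)ᴴ * (B * K i))
        + Wᴴ * ((K i)ᴴ * K i) * W := by
    intro i
    simp only [conjTranspose_sub, conjTranspose_mul, Matrix.sub_mul, Matrix.mul_sub,
      Matrix.mul_assoc]
    abel
  simp only [hexp, Finset.sum_add_distrib, Finset.sum_sub_distrib, ← Finset.sum_mul,
    ← Finset.mul_sum, ← hW, ← hW', hK, krausDual, Matrix.mul_one]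
  abel

theorem trace_krausDual_mul_conjTranspose_le [Fintype m] [Fintype n] [DecidableEq n]
    (hK : ∑ i, (K i)ᴴ * K i = 1) {ρ : Matrix n n 𝕜} (hρ : ρ.PosSemidef) (B : Matrix m m 𝕜) :
    (krausDual K B * ρ * (krausDual K B)ᴴ).trace ≤ (B * krausMap K ρ * Bᴴ).trace := by
  rw [trace_mul_cycle (krausDual K B), trace_mul_cycle B, trace_mul_krausMap, ← sub_nonneg,
    ← trace_sub, ← Matrix.sub_mul]
  exact (posSemidef_krausDual_sub_conjTranspose_mul_self K hK B).trace_mul_nonneg hρ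

end Matrix

section

variable {n : Type} [Fintype n] [DecidableEq n] {A σ : Matrix n n ℂ}

theorem Matrix.IsHermitian.mpinv_eq_cfc_inv (hA : A.IsHermitian) :
    mpinv A = cfc (fun t : ℝ => t⁻¹) A := by
  -- `0⁻¹ = 0` in `ℝ`, so the cut-off in `mpinv` is the real inverse itself
  rw [mpinv, matFun, dif_pos hA, ← hA.cfc_eq]
  congr 1
  ext t
  split_ifs with ht <;> simp [ht]

theorem isHermitian_mpinv (A : Matrix n n ℂ) : (mpinv A).IsHermitian := by
  by_cases hA : A.IsHermitian
  · rw [hA.mpinv_eq_cfc_inv]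
    exact cfc_predicate _ A
  · rw [mpinv, matFun, dif_neg hA]
    exact isHermitian_zero

theorem Matrix.IsHermitian.mpinv_mul_self_mul_mpinv (hA : A.IsHermitian) :
    mpinv A * A * mpinv A = mpinv A := by
  rw [hA.mpinv_eq_cfc_inv]
  have hc (f : ℝ → ℝ) : ContinuousOn f (spectrum ℝ A) := A.finite_real_spectrum.continuousOn f
  conv_lhs => enter [1, 2]; rw [← cfc_id' ℝ A]
  rw [← cfc_mul _ _ _ (hc _) (hc _), ← cfc_mul _ _ _ (hc _) (hc _)]
  congr 1
  funext t
  simpa using mul_inv_mul_cancel t⁻¹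

theorem Matrix.PosDef.mpinv_eq_ringInverse (hA : A.PosDef) : mpinv A = Ring.inverse A := by
  rw [hA.isHermitian.mpinv_eq_cfc_inv]
  exact cfc_ringInverse_id (a := A) hA.isUnit hA.isHermitian

theorem Matrix.PosDef.mpinv_mul_self (hA : A.PosDef) : mpinv A * A = 1 := by
  rw [hA.mpinv_eq_ringInverse, Ring.inverse_mul_cancel _ hA.isUnit]

theorem Matrix.PosDef.mul_mpinv_self (hA : A.PosDef) : A * mpinv A = 1 := by
  rw [hA.mpinv_eq_ringInverse, Ring.mul_inverse_cancel _ hA.isUnit]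

theorem mul_mpinv_mul_conjTranspose (hσ : σ.IsHermitian) (hA : A.IsHermitian) :
    A * mpinv σ * σ * (A * mpinv σ)ᴴ = A * mpinv σ * A := by
  rw [conjTranspose_mul, (isHermitian_mpinv σ).eq, hA.eq]
  calc A * mpinv σ * σ * (mpinv σ * A) = A * (mpinv σ * σ * mpinv σ) * A := by
        simp only [Matrix.mul_assoc]
    _ = A * mpinv σ * A := by rw [hσ.mpinv_mul_self_mul_mpinv]

theorem two_mul_re_trace_sub_le_JR {ρ X : Matrix n n ℂ} (hρ : ρ.PosDef) (hX : X.IsHermitian)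
    (V : Matrix n n ℂ) :
    2 * (V * X).trace.re - (V * ρ * Vᴴ).trace.re ≤ JR ρ X := by
  set G := X * mpinv ρ - V
  have hG : G * ρ * Gᴴ = X * mpinv ρ * X - (V * X)ᴴ - V * X + V * ρ * Vᴴ := by
    simp only [G, conjTranspose_sub, conjTranspose_mul, (isHermitian_mpinv ρ).eq, hX.eq]
    calc (X * mpinv ρ - V) * ρ * (mpinv ρ * X - Vᴴ)
        = X * (mpinv ρ * ρ) * (mpinv ρ * X) - X * (mpinv ρ * ρ) * Vᴴ - V * (ρ * mpinv ρ) * X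
          + V * ρ * Vᴴ := by noncomm_ring
      _ = _ := by rw [hρ.mpinv_mul_self, hρ.mul_mpinv_self]; noncomm_ring
  have hpos : 0 ≤ (G * ρ * Gᴴ).trace.re :=
    (Complex.nonneg_iff.mp (hρ.posSemidef.mul_mul_conjTranspose_same G).trace_nonneg).1
  rw [hG, trace_add, trace_sub, trace_sub, trace_conjTranspose] at hpos
  simp only [Complex.add_re, Complex.sub_re, Complex.star_def, Complex.conj_re] at hpos
  rw [JR]
  linarith

end

theorem JR_krausMap_le {n m ι : Type} [Fintype n] [DecidableEq n] [Fintype m] [DecidableEq m]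
    [Fintype ι] (K : ι → Matrix m n ℂ) (hK : ∑ i, (K i)ᴴ * K i = 1) {ρ X : Matrix n n ℂ}
    (hρ : ρ.PosDef) (hX : X.IsHermitian) :
    JR (krausMap K ρ) (krausMap K X) ≤ JR ρ X := by
  set Y := krausMap K X * mpinv (krausMap K ρ)
  have hσ := (hρ.posSemidef.krausMap K).isHermitian
  have hJR : JR (krausMap K ρ) (krausMap K X) = (krausDual K Y * X).trace.re := by
    rw [JR, ← trace_mul_krausMap]
  have hJR' : JR (krausMap K ρ) (krausMap K X) = (Y * krausMap K ρ * Yᴴ).trace.re := by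
    rw [JR, mul_mpinv_mul_conjTranspose hσ (hX.krausMap K)]
  have hschwarz := (Complex.le_def.mp
    (trace_krausDual_mul_conjTranspose_le K hK hρ.posSemidef Y)).1
  have hvariational := two_mul_re_trace_sub_le_JR hρ hX (krausDual K Y)
  linarith

theorem stmt_12_general {d₁ d₂ : ℕ} (ρ X : Matrix (Fin d₁) (Fin d₁) ℂ)
    (hpd : ρ.PosDef) (hX : X.IsHermitian)
    (Λ : Matrix (Fin d₁) (Fin d₁) ℂ → Matrix (Fin d₂) (Fin d₂) ℂ) (hΛ : IsCPTP Λ) :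
    JR (Λ ρ) (Λ X) ≤ JR ρ X := by
  obtain ⟨k, K, hK, hΛK⟩ := hΛ
  obtain rfl : Λ = krausMap K := funext hΛK
  exact JR_krausMap_le K hK hpd hX

/-- the RLD Fisher information is monotone under CPTP maps. -/
theorem stmt_12 {d₁ d₂ : ℕ} (ρ X : Matrix (Fin d₁) (Fin d₁) ℂ)
    (hρ : IsDensity ρ) (hpd : ρ.PosDef) (hX : X.IsHermitian) (hXtr : X.trace = 0)
    (Λ : Matrix (Fin d₁) (Fin d₁) ℂ → Matrix (Fin d₂) (Fin d₂) ℂ) (hΛ : IsCPTP Λ)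
    (hRLD : msupp (Λ X) ≤ msupp (Λ ρ)) :
    JR (Λ ρ) (Λ X) ≤ JR ρ X :=
  stmt_12_general ρ X hpd hX Λ hΛ
end

section
/- Let $g$ assign to each smooth family of states a metric value such that $g$ coincides with classical Fisher information on probability distributions and is monotone non-increasing under measurements (quantum-to-classical channels). Then $g_{\rho_\theta}(\dot\rho_\theta,\dot\rho_\theta) \geq J^S_{\rho_\theta}(\dot\rho_\theta,\dot\rho_\theta)$, where $J^S$ is the SLD Fisher information. -/
open Matrix BigOperators Filter
open scoped ComplexOrder

/-!
Measure `ρ` in an orthonormal eigenbasis `(u x)` of `L`. Each projector `|u x⟩⟨u x|` is absorbed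
by `L` on either side with the eigenvalue `μ x`, so the outcome distribution is
`p x = ⟨u x, ρ u x⟩ > 0` and its tangent `tr (|u x⟩⟨u x| X)` is `μ x * p x`. The classical Fisher
information of this measurement is therefore `∑ μ x ^ 2 * p x = tr (ρ L L)`, and monotonicity of `g`
under the measurement gives the bound.
-/

section Outer

variable {n : Type} [Fintype n]

lemma posSemidef_outer (u : n → ℂ) : (outer u).PosSemidef :=
  posSemidef_vecMulVec_self_star u

lemma trace_outer_mul (u : n → ℂ) (B : Matrix n n ℂ) :
    (outer u * B).trace = star u ⬝ᵥ (B *ᵥ u) := by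
  rw [outer, vecMulVec_mul, trace_vecMulVec, dotProduct_comm, dotProduct_mulVec]

lemma mul_outer_of_mulVec_eq_smul {L : Matrix n n ℂ} {u : n → ℂ} {c : ℂ}
    (hu : L *ᵥ u = c • u) : L * outer u = c • outer u := by
  rw [outer, mul_vecMulVec, hu, smul_vecMulVec]

lemma outer_mul_of_mulVec_eq_smul {L : Matrix n n ℂ} (hL : L.IsHermitian) {u : n → ℂ} {c : ℝ}
    (hu : L *ᵥ u = (c : ℂ) • u) : outer u * L = (c : ℂ) • outer u := by
  rw [outer, vecMulVec_mul, ← hL.eq, ← star_mulVec, hu, star_smul, Complex.star_def,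
    Complex.conj_ofReal, vecMulVec_smul]

lemma sum_outer_orthonormalBasis [DecidableEq n] (b : OrthonormalBasis n ℂ (EuclideanSpace ℂ n)) :
    ∑ x, outer (b x) = 1 := by
  have h := (EuclideanSpace.basisFun n ℂ).toMatrix_orthonormalBasis_self_mul_conjTranspose b
  ext i j
  simpa [outer, Matrix.sum_apply, Matrix.mul_apply, Module.Basis.toMatrix_apply, vecMulVec_apply]
    using congr($h i j)

end Outer

section Trace

variable {n : Type} [Fintype n] {L M : Matrix n n ℂ} {c : ℂ}

lemma trace_eq_sum_trace_mul [DecidableEq n] {m : Type} [Fintype m] {M : m → Matrix n n ℂ}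
    (hM : ∑ x, M x = 1) (B : Matrix n n ℂ) : B.trace = ∑ x, (M x * B).trace := by
  rw [← trace_sum, ← Finset.sum_mul, hM, Matrix.one_mul]

lemma trace_mul_mul_right_of_mul_eq_smul (hLM : L * M = c • M) (B : Matrix n n ℂ) :
    (M * (B * L)).trace = c * (M * B).trace := by
  rw [← Matrix.mul_assoc, trace_mul_comm, ← Matrix.mul_assoc, hLM, smul_mul, trace_smul,
    smul_eq_mul]

lemma trace_mul_mul_left_of_mul_eq_smul (hML : M * L = c • M) (B : Matrix n n ℂ) :
    (M * (L * B)).trace = c * (M * B).trace := by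
  rw [← Matrix.mul_assoc, hML, smul_mul, trace_smul, smul_eq_mul]

lemma trace_mul_half_anticommutator (hLM : L * M = c • M) (hML : M * L = c • M)
    (ρ : Matrix n n ℂ) : (M * ((1 / 2 : ℂ) • (L * ρ + ρ * L))).trace = c * (M * ρ).trace := by
  rw [Matrix.mul_smul, trace_smul, Matrix.mul_add, trace_add,
    trace_mul_mul_left_of_mul_eq_smul hML, trace_mul_mul_right_of_mul_eq_smul hLM, smul_eq_mul]
  ring

lemma trace_mul_mul_mul_self (hLM : L * M = c • M) (ρ : Matrix n n ℂ) :
    (M * (ρ * L * L)).trace = c ^ 2 * (M * ρ).trace := by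
  rw [trace_mul_mul_right_of_mul_eq_smul hLM, trace_mul_mul_right_of_mul_eq_smul hLM]
  ring

end Trace

section EigenMeasurement

variable {n : Type} [Fintype n] [DecidableEq n] {L : Matrix n n ℂ}

lemma Matrix.IsHermitian.mulVec_eigenvectorBasis_complex (hL : L.IsHermitian) (x : n) :
    L *ᵥ ⇑(hL.eigenvectorBasis x) = (hL.eigenvalues x : ℂ) • ⇑(hL.eigenvectorBasis x) := by
  rw [hL.mulVec_eigenvectorBasis, Complex.coe_smul]

noncomputable def eigenMeasurement (hL : L.IsHermitian) (x : n) : Matrix n n ℂ :=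
  outer (hL.eigenvectorBasis x)

lemma posSemidef_eigenMeasurement (hL : L.IsHermitian) (x : n) :
    (eigenMeasurement hL x).PosSemidef :=
  posSemidef_outer _

lemma sum_eigenMeasurement (hL : L.IsHermitian) : ∑ x, eigenMeasurement hL x = 1 :=
  sum_outer_orthonormalBasis _

lemma mul_eigenMeasurement (hL : L.IsHermitian) (x : n) :
    L * eigenMeasurement hL x = (hL.eigenvalues x : ℂ) • eigenMeasurement hL x :=
  mul_outer_of_mulVec_eq_smul (hL.mulVec_eigenvectorBasis_complex x)

lemma eigenMeasurement_mul (hL : L.IsHermitian) (x : n) :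
    eigenMeasurement hL x * L = (hL.eigenvalues x : ℂ) • eigenMeasurement hL x :=
  outer_mul_of_mulVec_eq_smul hL (hL.mulVec_eigenvectorBasis_complex x)

lemma re_trace_eigenMeasurement_mul_pos (hL : L.IsHermitian) {ρ : Matrix n n ℂ} (hρ : ρ.PosDef)
    (x : n) : 0 < (eigenMeasurement hL x * ρ).trace.re := by
  rw [eigenMeasurement, trace_outer_mul]
  exact (Complex.pos_iff.mp (hρ.dotProduct_mulVec_pos
    (by simpa using hL.eigenvectorBasis.orthonormal.ne_zero x))).1

end EigenMeasurement

/-- a metric `g` agreeing with classical Fisher information on probability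
distributions and monotone under measurements is bounded below by the SLD Fisher
information (expressed via the symmetric logarithmic derivative `L`). -/
theorem stmt_14
    (g : (d : ℕ) → Matrix (Fin d) (Fin d) ℂ → Matrix (Fin d) (Fin d) ℂ → ℝ)
    (hnorm : ∀ (m : ℕ) (p dp : Fin m → ℝ), IsProb p → (∀ x, 0 < p x) → (∑ x, dp x = 0) →
      g m (Matrix.diagonal (fun x => (p x : ℂ))) (Matrix.diagonal (fun x => (dp x : ℂ)))
        = ∑ x, (dp x) ^ 2 / p x)
    (hmono : ∀ (d m : ℕ) (M : Fin m → Matrix (Fin d) (Fin d) ℂ),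
      (∀ x, (M x).PosSemidef) → (∑ x, M x = 1) →
      ∀ (ρ X : Matrix (Fin d) (Fin d) ℂ), IsDensity ρ → X.IsHermitian → X.trace = 0 →
        g m (Matrix.diagonal (fun x => ((Matrix.trace (M x * ρ)).re : ℂ)))
            (Matrix.diagonal (fun x => ((Matrix.trace (M x * X)).re : ℂ))) ≤ g d ρ X)
    {d : ℕ} (ρ X : Matrix (Fin d) (Fin d) ℂ)
    (hρ : IsDensity ρ) (hpd : ρ.PosDef) (hX : X.IsHermitian) (hXtr : X.trace = 0)
    (L : Matrix (Fin d) (Fin d) ℂ) (hL : L.IsHermitian)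
    (hSLD : X = ((1 : ℂ)/2) • (L * ρ + ρ * L)) :
    (Matrix.trace (ρ * L * L)).re ≤ g d ρ X := by
  set M := eigenMeasurement hL
  set μ := hL.eigenvalues
  set p : Fin d → ℝ := fun x => (M x * ρ).trace.re
  have hp : ∀ x, 0 < p x := re_trace_eigenMeasurement_mul_pos hL hpd
  have hXp : ∀ x, (M x * X).trace.re = μ x * p x := fun x => by
    rw [hSLD, trace_mul_half_anticommutator (mul_eigenMeasurement hL x) (eigenMeasurement_mul hL x),
      Complex.re_ofReal_mul]
  have hprob : IsProb p := ⟨fun x => (hp x).le, by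
    rw [← Complex.re_sum, ← trace_eq_sum_trace_mul (sum_eigenMeasurement hL), hρ.2,
      Complex.one_re]⟩
  have hdp : ∑ x, μ x * p x = 0 := by
    simp only [← hXp]
    rw [← Complex.re_sum, ← trace_eq_sum_trace_mul (sum_eigenMeasurement hL), hXtr,
      Complex.zero_re]
  have hJ : (ρ * L * L).trace.re = ∑ x, (μ x * p x) ^ 2 / p x := by
    rw [trace_eq_sum_trace_mul (sum_eigenMeasurement hL), Complex.re_sum]
    refine Finset.sum_congr rfl fun x _ => ?_
    rw [trace_mul_mul_mul_self (mul_eigenMeasurement hL x), ← Complex.ofReal_pow,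
      Complex.re_ofReal_mul, mul_pow, sq (p x), ← mul_assoc, mul_div_cancel_right₀ _ (hp x).ne']
  calc (ρ * L * L).trace.re = ∑ x, (μ x * p x) ^ 2 / p x := hJ
    _ = g d (diagonal fun x => (p x : ℂ)) (diagonal fun x => ((μ x * p x : ℝ) : ℂ)) :=
      (hnorm d p _ hprob hp hdp).symm
    _ ≤ g d ρ X := by
      simpa only [hXp] using hmono d d M (posSemidef_eigenMeasurement hL)
        (sum_eigenMeasurement hL) ρ X hρ hX hXtr
end

section
/- (Achievability of asymptotic reverse test) Let $\{\rho^n\}, \{\sigma^n\}$ be sequences of density operators with $D := \mathrm{D}^\infty_{\max}(\{\rho^n\}\|\{\sigma^n\}) < \infty$. Then for every $c > 0$ there exist binary probability distributions $p^n, q^n$ on $\{0,1\}$ and classical-to-quantum channels $\Phi^n$ such that $\|\Phi^n(p^n) - \rho^n\|_1 \to 0$, $\Phi^n(q^n) = \sigma^n$, $p^n(0) \to 1$, $q^n(1) \to 1$, and $\liminf_n \frac{-1}{n}\ln q^n(0) = D + c$. -/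
open Matrix BigOperators Filter
open scoped ComplexOrder

/-- The set of achievable exponents defining `D^∞_max({ρⁿ}‖{σⁿ})`. -/
def DmaxSet (H : ℕ → ℕ) (ρ σ : ∀ n : ℕ, Matrix (Fin (H n)) (Fin (H n)) ℂ) : Set ℝ :=
  {a | ∃ ρt : ∀ n : ℕ, Matrix (Fin (H n)) (Fin (H n)) ℂ,
    (∀ n, IsDensity (ρt n)) ∧
    (∀ n : ℕ, (((Real.exp (n * a) : ℝ) : ℂ) • σ n - ρt n).PosSemidef) ∧
    Filter.Tendsto (fun n => traceNorm (ρt n - ρ n)) Filter.atTop (nhds 0)}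

/-
Choose `a ∈ DmaxSet` with `a < b := D + c`, witnessed by states `ρ̃ⁿ ≤ e^{na} σⁿ`. For
`tₙ = e^{-nb}` we have `tₙ e^{na} ≤ 1`, so `σⁿ - tₙ ρ̃ⁿ ≥ 0` and `σⁿ = tₙ ρ̃ⁿ + (1 - tₙ) φⁿ` for a
state `φⁿ`. The channel `0 ↦ ρ̃ⁿ, 1 ↦ φⁿ` with `pⁿ = (1, 0)` and `qⁿ = (tₙ, 1 - tₙ)` is then a
reverse test with `-(1/n) ln qⁿ(0) = b` exactly. Positivity of `b` comes from `D ≥ 0`, read off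
the trace of `e^{a} σ¹ - ρ̃¹ ≥ 0`.
-/

section BinaryReverseTest

variable {m : Type}

lemma one_le_of_posSemidef_smul_sub [Fintype m] {σ τ : Matrix m m ℂ} {e : ℝ} (hσ : σ.trace = 1)
    (hτ : τ.trace = 1) (h : ((e : ℂ) • σ - τ).PosSemidef) : 1 ≤ e := by
  have htr := h.trace_nonneg
  rw [trace_sub, trace_smul, hσ, hτ, smul_eq_mul, mul_one, ← Complex.ofReal_one,
    ← Complex.ofReal_sub, Complex.zero_le_real] at htr
  linarith

lemma posSemidef_sub_smul_of_posSemidef_smul_sub {σ τ : Matrix m m ℂ} {e s : ℝ}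
    (hσ : σ.PosSemidef) (h : ((e : ℂ) • σ - τ).PosSemidef) (hs : 0 ≤ s) (hse : s * e ≤ 1) :
    (σ - (s : ℂ) • τ).PosSemidef := by
  have hsplit : σ - (s : ℂ) • τ = (s : ℂ) • ((e : ℂ) • σ - τ) + ((1 - s * e : ℝ) : ℂ) • σ := by
    push_cast
    rw [smul_sub, smul_smul, sub_smul, one_smul]
    abel
  rw [hsplit]
  exact (h.smul (Complex.zero_le_real.mpr hs)).add
    (hσ.smul (Complex.zero_le_real.mpr (sub_nonneg.mpr hse)))

noncomputable def residualState (σ τ : Matrix m m ℂ) (t : ℝ) : Matrix m m ℂ :=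
  (((1 - t)⁻¹ : ℝ) : ℂ) • (σ - (t : ℂ) • τ)

lemma isDensity_residualState [Fintype m] [DecidableEq m] {σ τ : Matrix m m ℂ} {t : ℝ}
    (hσ : σ.trace = 1) (hτ : τ.trace = 1) (ht : t < 1) (h : (σ - (t : ℂ) • τ).PosSemidef) :
    IsDensity (residualState σ τ t) := by
  have hne : (1 - t : ℝ) ≠ 0 := by linarith
  refine ⟨h.smul (Complex.zero_le_real.mpr (inv_nonneg.mpr (by linarith))), ?_⟩
  rw [residualState, trace_smul, trace_sub, trace_smul, hσ, hτ, smul_eq_mul, smul_eq_mul,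
    mul_one, ← Complex.ofReal_one, ← Complex.ofReal_sub, ← Complex.ofReal_mul,
    inv_mul_cancel₀ hne, Complex.ofReal_one]

lemma smul_add_smul_residualState (σ τ : Matrix m m ℂ) {t : ℝ} (ht : t ≠ 1) :
    (t : ℂ) • τ + ((1 - t : ℝ) : ℂ) • residualState σ τ t = σ := by
  have hne : (1 - t : ℝ) ≠ 0 := sub_ne_zero.mpr ht.symm
  rw [residualState, smul_smul, ← Complex.ofReal_mul, mul_inv_cancel₀ hne, Complex.ofReal_one,
    one_smul, add_sub_cancel]

lemma isProb_pair {t : ℝ} (h0 : 0 ≤ t) (h1 : t ≤ 1) : IsProb ![t, 1 - t] :=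
  ⟨fun x => by fin_cases x <;> simp [h0, h1], by simp⟩

end BinaryReverseTest

section ExponentialWeight

open Real

/- Set to `0` at `n = 0`, where `e^{-n b} = 1` would leave no room for a residual state. -/
noncomputable def expWeight (b : ℝ) (n : ℕ) : ℝ := if n = 0 then 0 else exp (-n * b)

variable {b : ℝ}

lemma expWeight_nonneg (n : ℕ) : 0 ≤ expWeight b n := by
  unfold expWeight; split_ifs <;> positivity

lemma expWeight_mul_exp_le_one {a : ℝ} (hab : a ≤ b) (n : ℕ) :
    expWeight b n * exp (n * a) ≤ 1 := by
  unfold expWeight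
  split_ifs
  · simp
  · rw [← exp_add, exp_le_one_iff]
    nlinarith [n.cast_nonneg (α := ℝ)]

lemma expWeight_lt_one (hb : 0 < b) (n : ℕ) : expWeight b n < 1 := by
  unfold expWeight
  split_ifs with hn
  · exact one_pos
  · rw [exp_lt_one_iff, neg_mul, neg_neg_iff_pos]
    exact mul_pos (Nat.cast_pos.mpr (Nat.pos_of_ne_zero hn)) hb

lemma tendsto_expWeight (hb : 0 < b) : Tendsto (expWeight b) atTop (nhds 0) := by
  have hpow : Tendsto (fun n : ℕ => exp (-b) ^ n) atTop (nhds 0) :=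
    tendsto_pow_atTop_nhds_zero_of_lt_one (exp_pos _).le (exp_lt_one_iff.mpr (by linarith))
  refine hpow.congr' ?_
  filter_upwards [eventually_ne_atTop 0] with n hn
  rw [expWeight, if_neg hn, ← exp_nat_mul]
  ring_nf

lemma liminf_neg_log_expWeight_div :
    liminf (fun n : ℕ => (-1 / (n : ℝ)) * log (expWeight b n)) atTop = b := by
  refine (liminf_congr ?_).trans (liminf_const b)
  filter_upwards [eventually_ne_atTop 0] with n hn
  rw [expWeight, if_neg hn, log_exp]
  field_simp

end ExponentialWeight

lemma nonneg_of_mem_DmaxSet {H : ℕ → ℕ} {ρ σ : ∀ n : ℕ, Matrix (Fin (H n)) (Fin (H n)) ℂ}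
    (hσ : (σ 1).trace = 1) {a : ℝ} (ha : a ∈ DmaxSet H ρ σ) : 0 ≤ a := by
  obtain ⟨ρt, hρt, hle, -⟩ := ha
  simpa using one_le_of_posSemidef_smul_sub hσ (hρt 1).2 (hle 1)

theorem stmt_16_general (H : ℕ → ℕ) (ρ σ : ∀ n : ℕ, Matrix (Fin (H n)) (Fin (H n)) ℂ)
    (hσ : ∀ n, IsDensity (σ n))
    (hfin : (DmaxSet H ρ σ).Nonempty) (c : ℝ) (hc : 0 < c) :
    ∃ (p q : ℕ → Fin 2 → ℝ) (Φ : ∀ n : ℕ, Fin 2 → Matrix (Fin (H n)) (Fin (H n)) ℂ),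
      (∀ n, IsProb (p n)) ∧ (∀ n, IsProb (q n)) ∧ (∀ n x, IsDensity (Φ n x)) ∧
      Filter.Tendsto (fun n => traceNorm ((∑ x, (p n x : ℂ) • Φ n x) - ρ n))
        Filter.atTop (nhds 0) ∧
      (∀ n, ∑ x, (q n x : ℂ) • Φ n x = σ n) ∧
      Filter.Tendsto (fun n => p n 0) Filter.atTop (nhds 1) ∧
      Filter.Tendsto (fun n => q n 1) Filter.atTop (nhds 1) ∧
      Filter.liminf (fun n : ℕ => (-1 / (n : ℝ)) * Real.log (q n 0)) Filter.atTop
        = sInf (DmaxSet H ρ σ) + c := by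
  set b := sInf (DmaxSet H ρ σ) + c
  have hD : 0 ≤ sInf (DmaxSet H ρ σ) :=
    le_csInf hfin fun a ha => nonneg_of_mem_DmaxSet (hσ 1).2 ha
  obtain ⟨a, haS, hab⟩ := exists_lt_of_csInf_lt hfin (lt_add_of_pos_right _ hc)
  obtain ⟨ρt, hρt, hle, hlim⟩ := haS
  have hb : 0 < b := by positivity
  set t := expWeight b
  have hsub (n : ℕ) : (σ n - (t n : ℂ) • ρt n).PosSemidef :=
    posSemidef_sub_smul_of_posSemidef_smul_sub (hσ n).1 (hle n) (expWeight_nonneg n)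
      (expWeight_mul_exp_le_one hab.le n)
  refine ⟨fun _ => ![1, 0], fun n => ![t n, 1 - t n],
    fun n => ![ρt n, residualState (σ n) (ρt n) (t n)], fun _ => ?_,
    fun n => isProb_pair (expWeight_nonneg n) (expWeight_lt_one hb n).le, fun n x => ?_, ?_,
    fun n => ?_, by simp, ?_, by simpa using liminf_neg_log_expWeight_div⟩
  · simpa using isProb_pair zero_le_one le_rfl
  · fin_cases x
    · exact hρt n
    · exact isDensity_residualState (hσ n).2 (hρt n).2 (expWeight_lt_one hb n) (hsub n)
  · simpa using hlim
  · rw [Fin.sum_univ_two]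
    exact smul_add_smul_residualState (σ n) (ρt n) (expWeight_lt_one hb n).ne
  · simpa using (tendsto_expWeight hb).const_sub 1

/-- achievability of the asymptotic reverse test: for every `c > 0` there
is an asymptotic reverse test whose rate is exactly `D^∞_max + c`. -/
theorem stmt_16 (H : ℕ → ℕ) (ρ σ : ∀ n : ℕ, Matrix (Fin (H n)) (Fin (H n)) ℂ)
    (hρ : ∀ n, IsDensity (ρ n)) (hσ : ∀ n, IsDensity (σ n))
    (hfin : (DmaxSet H ρ σ).Nonempty) (c : ℝ) (hc : 0 < c) :
    ∃ (p q : ℕ → Fin 2 → ℝ) (Φ : ∀ n : ℕ, Fin 2 → Matrix (Fin (H n)) (Fin (H n)) ℂ),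
      (∀ n, IsProb (p n)) ∧ (∀ n, IsProb (q n)) ∧ (∀ n x, IsDensity (Φ n x)) ∧
      Filter.Tendsto (fun n => traceNorm ((∑ x, (p n x : ℂ) • Φ n x) - ρ n))
        Filter.atTop (nhds 0) ∧
      (∀ n, ∑ x, (q n x : ℂ) • Φ n x = σ n) ∧
      Filter.Tendsto (fun n => p n 0) Filter.atTop (nhds 1) ∧
      Filter.Tendsto (fun n => q n 1) Filter.atTop (nhds 1) ∧
      Filter.liminf (fun n : ℕ => (-1 / (n : ℝ)) * Real.log (q n 0)) Filter.atTop
        = sInf (DmaxSet H ρ σ) + c :=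
  stmt_16_general H ρ σ hσ hfin c hc
end
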